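/- Dynamic-programming principle for DMH-HARQ with integer blocklengths: when blocklengths are restricted to integers, the supremum over all (history-dependent) feasible blocklength policies of the utility from any state (t, i, k, τ) is attained, depends only on (t, i), and satisfies the Bellman equation ξ_max(t, i) = max over admissible integer n of { ε_i(n)·ξ_max(t − n·T_b − T_l, i) + (1 − ε_i(n))·ξ_max(t − n·T_b − T_l, i−1) } for i ≥ 1 and t ≥ T_min^{(i)}, with ξ_max(t, 0) = 1 and ξ_max(t, i) = 0 for t < T_min^{(i)}. Consequently, an optimal deterministic policy (t, i) ↦ n_opt(t, i) exists and the recursive integer dynamic program solves the reliability-maximizing schedule exactly. -/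
import Mathlib


/-- A DMH-HARQ system state `s = (t, i, k, τ)`: remaining time `t`, remaining hops `i`,
number `k` of failed HARQ attempts on the current hop, and accumulated time `τ` of these
failed attempts. -/
structure DMHState where
  t : ℝ
  i : ℕ
  k : ℕ
  τ : ℝ

namespace DMHHARQ

/-- `T_min^{(i)} = Σ_{j=1}^i (n_min,j·T_b + T_l)` (with `T_min^{(0)} = 0`). -/
noncomputable def Tmin (Tb Tl : ℝ) (nmin : ℕ → ℕ) (i : ℕ) : ℝ :=
  ∑ j ∈ Finset.Icc 1 i, ((nmin j : ℝ) * Tb + Tl)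

/-- Left (failure) child of state `s` when blocklength `n` is used. -/
def leftChild (Tb Tl n : ℝ) (s : DMHState) : DMHState :=
  ⟨s.t - n * Tb - Tl, s.i, s.k + 1, s.τ + n * Tb⟩

/-- Right (success) child of state `s` when blocklength `n` is used. -/
def rightChild (Tb Tl n : ℝ) (s : DMHState) : DMHState :=
  ⟨s.t - n * Tb - Tl, s.i - 1, 0, 0⟩

/-- A blocklength policy is feasible if at every non-terminal state `s` (i.e. `1 ≤ i ≤ I` and
`t ≥ T_min^{(i)}`) it assigns a blocklength `n_s ∈ [n_min,i, (t − T_min^{(i−1)})/T_b]`. -/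
def Feasible (I : ℕ) (Tb Tl : ℝ) (nmin : ℕ → ℕ) (pol : DMHState → ℝ) : Prop :=
  ∀ s : DMHState, 1 ≤ s.i → s.i ≤ I → Tmin Tb Tl nmin s.i ≤ s.t →
    (nmin s.i : ℝ) ≤ pol s ∧ pol s ≤ (s.t - Tmin Tb Tl nmin (s.i - 1)) / Tb

/-- A policy takes only integer blocklengths. -/
def IntegerValued (pol : DMHState → ℝ) : Prop :=
  ∀ s : DMHState, ∃ n : ℕ, pol s = (n : ℝ)

/-- `PolicyUtility Tb Tl ε nmin pol s u` asserts that the schedule tree generated by policy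
`pol` from state `s` has utility `u`: a state with `i = 0` is a success leaf (utility 1); a
state with `i ≥ 1` and `t < T_min^{(i)}` is a failure leaf (utility 0); otherwise the utility
is `ε i (pol s)·(utility of the failure child) + (1 − ε i (pol s))·(utility of the success
child)`. -/
inductive PolicyUtility (Tb Tl : ℝ) (ε : ℕ → ℝ → ℝ) (nmin : ℕ → ℕ)
    (pol : DMHState → ℝ) : DMHState → ℝ → Prop
  | success (s : DMHState) (h : s.i = 0) : PolicyUtility Tb Tl ε nmin pol s 1
  | timeout (s : DMHState) (h1 : 1 ≤ s.i) (h2 : s.t < Tmin Tb Tl nmin s.i) :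
      PolicyUtility Tb Tl ε nmin pol s 0
  | step (s : DMHState) (xl xr : ℝ) (h1 : 1 ≤ s.i) (h2 : Tmin Tb Tl nmin s.i ≤ s.t)
      (hl : PolicyUtility Tb Tl ε nmin pol (leftChild Tb Tl (pol s) s) xl)
      (hr : PolicyUtility Tb Tl ε nmin pol (rightChild Tb Tl (pol s) s) xr) :
      PolicyUtility Tb Tl ε nmin pol s (ε s.i (pol s) * xl + (1 - ε s.i (pol s)) * xr)

/-- `ξ_max(t, i)`: the supremum, over all feasible integer-blocklength policies, of the
utility from the state `(t, i, 0, 0)`. -/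
noncomputable def xiMax (I : ℕ) (Tb Tl : ℝ) (ε : ℕ → ℝ → ℝ) (nmin : ℕ → ℕ)
    (t : ℝ) (i : ℕ) : ℝ :=
  sSup {u : ℝ | ∃ pol : DMHState → ℝ, Feasible I Tb Tl nmin pol ∧ IntegerValued pol ∧
    PolicyUtility Tb Tl ε nmin pol ⟨t, i, 0, 0⟩ u}

end DMHHARQ

namespace DMHHARQ.Aux

open DMHHARQ

variable (Tb Tl : ℝ) (ε : ℕ → ℝ → ℝ) (nmin : ℕ → ℕ)

noncomputable def bigA (t : ℝ) (i : ℕ) : Finset ℕ :=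
  Finset.Icc (nmin i) (max (nmin i) ⌊(t - Tmin Tb Tl nmin (i - 1)) / Tb⌋₊)

lemma bigA_nonempty (t : ℝ) (i : ℕ) : (bigA Tb Tl nmin t i).Nonempty :=
  Finset.nonempty_Icc.2 (le_max_left _ _)

noncomputable def Vf : ℕ → ℝ → ℕ → ℝ
  | 0, _, i => if i = 0 then 1 else 0
  | m + 1, t, i =>
    if i = 0 then 1
    else if t < Tmin Tb Tl nmin i then 0
    else (bigA Tb Tl nmin t i).sup' (bigA_nonempty Tb Tl nmin t i)
      fun n => ε i (n : ℝ) * Vf m (t - (n : ℝ) * Tb - Tl) i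
        + (1 - ε i (n : ℝ)) * Vf m (t - (n : ℝ) * Tb - Tl) (i - 1)

lemma Vf_zero_eq (t : ℝ) (i : ℕ) :
    Vf Tb Tl ε nmin 0 t i = if i = 0 then 1 else 0 := rfl

lemma Vf_succ_eq (m : ℕ) (t : ℝ) (i : ℕ) :
    Vf Tb Tl ε nmin (m + 1) t i =
      if i = 0 then 1
      else if t < Tmin Tb Tl nmin i then 0
      else (bigA Tb Tl nmin t i).sup' (bigA_nonempty Tb Tl nmin t i)
        fun n => ε i (n : ℝ) * Vf Tb Tl ε nmin m (t - (n : ℝ) * Tb - Tl) i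
          + (1 - ε i (n : ℝ)) * Vf Tb Tl ε nmin m (t - (n : ℝ) * Tb - Tl) (i - 1) := rfl

lemma Tmin_nonneg (hTb : 0 ≤ Tb) (hTl : 0 ≤ Tl) (i : ℕ) : 0 ≤ Tmin Tb Tl nmin i :=
  Finset.sum_nonneg fun j _ => add_nonneg (mul_nonneg (Nat.cast_nonneg _) hTb) hTl

lemma Tmin_pos (hTb : 0 ≤ Tb) (hTl : 0 < Tl) {i : ℕ} (hi : 1 ≤ i) :
    0 < Tmin Tb Tl nmin i :=
  Finset.sum_pos (fun j _ => add_pos_of_nonneg_of_pos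
    (mul_nonneg (Nat.cast_nonneg _) hTb) hTl) (by simp [Finset.nonempty_Icc, hi])

lemma Tmin_succ {i : ℕ} (hi : 1 ≤ i) :
    Tmin Tb Tl nmin i = Tmin Tb Tl nmin (i - 1) + ((nmin i : ℝ) * Tb + Tl) := by
  obtain ⟨j, rfl⟩ := Nat.exists_eq_add_of_le hi
  simp only [Nat.add_sub_cancel_left, Tmin]
  rw [add_comm 1 j]
  exact Finset.sum_Icc_succ_top (Nat.le_add_left 1 j) _

lemma ceil_child_le (hTb : 0 ≤ Tb) (hTl : 0 < Tl) {t : ℝ} {m : ℕ} (n : ℕ)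
    (h : ⌈t / Tl⌉₊ ≤ m + 1) : ⌈(t - (n : ℝ) * Tb - Tl) / Tl⌉₊ ≤ m := by
  rw [Nat.ceil_le, div_le_iff₀ hTl] at h ⊢
  push_cast at h ⊢
  nlinarith [mul_nonneg (Nat.cast_nonneg n : (0:ℝ) ≤ n) hTb]

variable {Tb Tl}

lemma Vf_stable (hTb : 0 ≤ Tb) (hTl : 0 < Tl) :
    ∀ (m : ℕ) (t : ℝ) (i : ℕ), ⌈t / Tl⌉₊ ≤ m →
      Vf Tb Tl ε nmin (m + 1) t i = Vf Tb Tl ε nmin m t i := by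
  intro m
  induction m with
  | zero =>
    intro t i h
    rcases Nat.eq_zero_or_pos i with hi | hi
    · rw [Vf_succ_eq, Vf_zero_eq, if_pos hi, if_pos hi]
    · have ht : t ≤ 0 := by
        have h0 := Nat.le_zero.1 h
        rw [Nat.ceil_eq_zero, div_nonpos_iff] at h0
        rcases h0 with ⟨_, h2⟩ | ⟨h1, _⟩
        · linarith
        · exact h1
      have hlt : t < Tmin Tb Tl nmin i :=
        lt_of_le_of_lt ht (Tmin_pos Tb Tl nmin hTb hTl hi)
      rw [Vf_succ_eq, Vf_zero_eq, if_neg (Nat.pos_iff_ne_zero.1 hi),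
        if_neg (Nat.pos_iff_ne_zero.1 hi), if_pos hlt]
  | succ m ih =>
    intro t i h
    rcases Nat.eq_zero_or_pos i with hi | hi
    · rw [Vf_succ_eq, Vf_succ_eq, if_pos hi, if_pos hi]
    · rcases lt_or_ge t (Tmin Tb Tl nmin i) with ht | ht
      · rw [Vf_succ_eq, Vf_succ_eq, if_neg (Nat.pos_iff_ne_zero.1 hi),
          if_neg (Nat.pos_iff_ne_zero.1 hi), if_pos ht, if_pos ht]
      · rw [Vf_succ_eq Tb Tl ε nmin (m+1), Vf_succ_eq Tb Tl ε nmin m, if_neg (Nat.pos_iff_ne_zero.1 hi),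
          if_neg (Nat.pos_iff_ne_zero.1 hi), if_neg (not_lt.2 ht), if_neg (not_lt.2 ht)]
        apply Finset.sup'_congr _ rfl
        intro n _
        rw [ih _ _ (ceil_child_le Tb Tl hTb hTl n h),
          ih _ _ (ceil_child_le Tb Tl hTb hTl n h)]

noncomputable def V (Tb Tl : ℝ) (ε : ℕ → ℝ → ℝ) (nmin : ℕ → ℕ) (t : ℝ) (i : ℕ) : ℝ :=
  Vf Tb Tl ε nmin ⌈t / Tl⌉₊ t i

lemma Vf_eq_V (hTb : 0 ≤ Tb) (hTl : 0 < Tl) {m : ℕ} {t : ℝ} (h : ⌈t / Tl⌉₊ ≤ m) (i : ℕ) :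
    Vf Tb Tl ε nmin m t i = V Tb Tl ε nmin t i := by
  obtain ⟨d, rfl⟩ := Nat.exists_eq_add_of_le h
  induction d with
  | zero => rfl
  | succ d ihd =>
    rw [← ihd (Nat.le_add_right _ _), ← Nat.add_assoc,
      Vf_stable ε nmin hTb hTl _ t i (Nat.le_add_right _ _)]

lemma V_zero (t : ℝ) : V Tb Tl ε nmin t 0 = 1 := by
  unfold V
  cases h : ⌈t / Tl⌉₊ with
  | zero => rw [Vf_zero_eq, if_pos rfl]
  | succ m => rw [Vf_succ_eq, if_pos rfl]

lemma V_timeout {t : ℝ} {i : ℕ} (hi : 1 ≤ i) (ht : t < Tmin Tb Tl nmin i) :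
    V Tb Tl ε nmin t i = 0 := by
  unfold V
  cases h : ⌈t / Tl⌉₊ with
  | zero => rw [Vf_zero_eq, if_neg (Nat.pos_iff_ne_zero.1 hi)]
  | succ m => rw [Vf_succ_eq, if_neg (Nat.pos_iff_ne_zero.1 hi), if_pos ht]

lemma V_bellman (hTb : 0 ≤ Tb) (hTl : 0 < Tl) {t : ℝ} {i : ℕ} (hi : 1 ≤ i)
    (ht : Tmin Tb Tl nmin i ≤ t) :
    V Tb Tl ε nmin t i = (bigA Tb Tl nmin t i).sup' (bigA_nonempty Tb Tl nmin t i)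
      (fun n => ε i (n : ℝ) * V Tb Tl ε nmin (t - (n : ℝ) * Tb - Tl) i
        + (1 - ε i (n : ℝ)) * V Tb Tl ε nmin (t - (n : ℝ) * Tb - Tl) (i - 1)) := by
  have htpos : 0 < t := lt_of_lt_of_le (Tmin_pos Tb Tl nmin hTb hTl hi) ht
  have hm : 1 ≤ ⌈t / Tl⌉₊ := Nat.one_le_ceil_iff.2 (div_pos htpos hTl)
  obtain ⟨m, hm'⟩ : ∃ m, ⌈t / Tl⌉₊ = m + 1 :=
    ⟨⌈t / Tl⌉₊ - 1, (Nat.succ_pred_eq_of_pos hm).symm⟩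
  rw [V, hm', Vf_succ_eq, if_neg (Nat.pos_iff_ne_zero.1 hi), if_neg (not_lt.2 ht)]
  apply Finset.sup'_congr _ rfl
  intro n _
  rw [Vf_eq_V ε nmin hTb hTl (ceil_child_le Tb Tl hTb hTl n hm'.le),
    Vf_eq_V ε nmin hTb hTl (ceil_child_le Tb Tl hTb hTl n hm'.le)]

noncomputable def fopt (Tb Tl : ℝ) (ε : ℕ → ℝ → ℝ) (nmin : ℕ → ℕ) (t : ℝ) (i : ℕ)
    (n : ℕ) : ℝ :=
  ε i (n : ℝ) * V Tb Tl ε nmin (t - (n : ℝ) * Tb - Tl) i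
    + (1 - ε i (n : ℝ)) * V Tb Tl ε nmin (t - (n : ℝ) * Tb - Tl) (i - 1)

noncomputable def nopt (Tb Tl : ℝ) (ε : ℕ → ℝ → ℝ) (nmin : ℕ → ℕ) (t : ℝ) (i : ℕ) : ℕ :=
  Classical.choose ((bigA Tb Tl nmin t i).exists_mem_eq_sup'
    (bigA_nonempty Tb Tl nmin t i) (fopt Tb Tl ε nmin t i))

lemma nopt_mem (t : ℝ) (i : ℕ) : nopt Tb Tl ε nmin t i ∈ bigA Tb Tl nmin t i :=
  (Classical.choose_spec ((bigA Tb Tl nmin t i).exists_mem_eq_sup'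
    (bigA_nonempty Tb Tl nmin t i) (fopt Tb Tl ε nmin t i))).1

lemma sup'_eq_fopt_nopt (t : ℝ) (i : ℕ) :
    (bigA Tb Tl nmin t i).sup' (bigA_nonempty Tb Tl nmin t i) (fopt Tb Tl ε nmin t i)
      = fopt Tb Tl ε nmin t i (nopt Tb Tl ε nmin t i) :=
  (Classical.choose_spec ((bigA Tb Tl nmin t i).exists_mem_eq_sup'
    (bigA_nonempty Tb Tl nmin t i) (fopt Tb Tl ε nmin t i))).2

lemma V_bellman' (hTb : 0 ≤ Tb) (hTl : 0 < Tl) {t : ℝ} {i : ℕ} (hi : 1 ≤ i)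
    (ht : Tmin Tb Tl nmin i ≤ t) :
    V Tb Tl ε nmin t i = (bigA Tb Tl nmin t i).sup' (bigA_nonempty Tb Tl nmin t i)
      (fopt Tb Tl ε nmin t i) :=
  V_bellman ε nmin hTb hTl hi ht

lemma V_eq_fopt_nopt (hTb : 0 ≤ Tb) (hTl : 0 < Tl) {t : ℝ} {i : ℕ} (hi : 1 ≤ i)
    (ht : Tmin Tb Tl nmin i ≤ t) :
    V Tb Tl ε nmin t i = fopt Tb Tl ε nmin t i (nopt Tb Tl ε nmin t i) := by
  rw [V_bellman' ε nmin hTb hTl hi ht, sup'_eq_fopt_nopt]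

/-- the optimal deterministic policy -/
noncomputable def polOpt (Tb Tl : ℝ) (ε : ℕ → ℝ → ℝ) (nmin : ℕ → ℕ) (s : DMHState) : ℝ :=
  ((nopt Tb Tl ε nmin s.t s.i : ℕ) : ℝ)

lemma sub_Tmin_nonneg (hTb : 0 ≤ Tb) (hTl : 0 ≤ Tl) {t : ℝ} {i : ℕ} (hi : 1 ≤ i)
    (ht : Tmin Tb Tl nmin i ≤ t) :
    (nmin i : ℝ) * Tb + Tl ≤ t - Tmin Tb Tl nmin (i - 1) := by
  have := Tmin_succ Tb Tl nmin (i := i) hi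
  linarith

lemma nmin_le_floor (hTb : 0 < Tb) (hTl : 0 ≤ Tl) {t : ℝ} {i : ℕ} (hi : 1 ≤ i)
    (ht : Tmin Tb Tl nmin i ≤ t) :
    nmin i ≤ ⌊(t - Tmin Tb Tl nmin (i - 1)) / Tb⌋₊ := by
  apply Nat.le_floor
  rw [le_div_iff₀ hTb]
  have := sub_Tmin_nonneg nmin hTb.le hTl hi ht
  linarith

lemma cast_le_div (hTb : 0 < Tb) (hTl : 0 ≤ Tl) {t : ℝ} {i : ℕ} (hi : 1 ≤ i)
    (ht : Tmin Tb Tl nmin i ≤ t) {n : ℕ}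
    (hn : n ∈ bigA Tb Tl nmin t i) :
    (n : ℝ) ≤ (t - Tmin Tb Tl nmin (i - 1)) / Tb := by
  have h2 := (Finset.mem_Icc.1 hn).2
  rw [max_eq_right (nmin_le_floor nmin hTb hTl hi ht)] at h2
  have hnum : 0 ≤ t - Tmin Tb Tl nmin (i - 1) := by
    have h3 := sub_Tmin_nonneg nmin hTb.le hTl hi ht
    have : 0 ≤ (nmin i : ℝ) * Tb := mul_nonneg (Nat.cast_nonneg _) hTb.le
    linarith
  calc (n : ℝ) ≤ (⌊(t - Tmin Tb Tl nmin (i - 1)) / Tb⌋₊ : ℝ) := Nat.cast_le.2 h2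
    _ ≤ _ := Nat.floor_le (div_nonneg hnum hTb.le)

lemma polOpt_feasible (I : ℕ) (hTb : 0 < Tb) (hTl : 0 < Tl) :
    Feasible I Tb Tl nmin (polOpt Tb Tl ε nmin) := by
  intro s h1 _ h2
  unfold polOpt
  constructor
  · exact_mod_cast (Finset.mem_Icc.1 (nopt_mem ε nmin s.t s.i)).1
  · exact cast_le_div nmin hTb hTl.le h1 h2 (nopt_mem ε nmin s.t s.i)

lemma polOpt_integer : IntegerValued (polOpt Tb Tl ε nmin) :=
  fun s => ⟨nopt Tb Tl ε nmin s.t s.i, rfl⟩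

lemma polOpt_achieves (hTb : 0 < Tb) (hTl : 0 < Tl) :
    ∀ (m : ℕ) (t : ℝ), ⌈t / Tl⌉₊ ≤ m → ∀ (i k : ℕ) (τ : ℝ),
      PolicyUtility Tb Tl ε nmin (polOpt Tb Tl ε nmin) ⟨t, i, k, τ⟩
        (V Tb Tl ε nmin t i) := by
  intro m
  induction m with
  | zero =>
    intro t h i k τ
    rcases Nat.eq_zero_or_pos i with hi | hi
    · subst hi
      rw [V_zero]
      exact PolicyUtility.success _ rfl
    · have ht : t ≤ 0 := by
        have h0 := Nat.le_zero.1 h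
        rw [Nat.ceil_eq_zero, div_nonpos_iff] at h0
        rcases h0 with ⟨_, h2⟩ | ⟨ht1, _⟩
        · linarith
        · exact ht1
      have hlt : t < Tmin Tb Tl nmin i :=
        lt_of_le_of_lt ht (Tmin_pos Tb Tl nmin hTb.le hTl hi)
      rw [V_timeout ε nmin hi hlt]
      exact PolicyUtility.timeout _ hi hlt
  | succ m ih =>
    intro t h i k τ
    rcases Nat.eq_zero_or_pos i with hi | hi
    · subst hi
      rw [V_zero]
      exact PolicyUtility.success _ rfl
    · rcases lt_or_ge t (Tmin Tb Tl nmin i) with ht | ht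
      · rw [V_timeout ε nmin hi ht]
        exact PolicyUtility.timeout _ hi ht
      · set n : ℕ := nopt Tb Tl ε nmin t i with hn
        have hceil : ⌈(t - (n : ℝ) * Tb - Tl) / Tl⌉₊ ≤ m :=
          ceil_child_le Tb Tl hTb.le hTl n h
        have hl := ih (t - (n : ℝ) * Tb - Tl) hceil i (k + 1) (τ + (n : ℝ) * Tb)
        have hr := ih (t - (n : ℝ) * Tb - Tl) hceil (i - 1) 0 0
        rw [V_eq_fopt_nopt ε nmin hTb.le hTl hi ht]
        exact PolicyUtility.step ⟨t, i, k, τ⟩ _ _ hi ht hl hr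

lemma le_V (I : ℕ) (hTb : 0 < Tb) (hTl : 0 < Tl)
    (hε : ∀ i, 1 ≤ i → i ≤ I → ∀ n : ℝ, 0 < n → ε i n ∈ Set.Ioo (0 : ℝ) 1)
    (hnmin : ∀ i, 1 ≤ i → i ≤ I → 0 < nmin i)
    (q : DMHState → ℝ) (hqf : Feasible I Tb Tl nmin q) (hqi : IntegerValued q) :
    ∀ (s : DMHState) (u : ℝ), PolicyUtility Tb Tl ε nmin q s u → s.i ≤ I →
      u ≤ V Tb Tl ε nmin s.t s.i := by
  intro s u hu
  induction hu with
  | success s h => intro _; rw [h, V_zero]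
  | timeout s h1 h2 => intro _; rw [V_timeout ε nmin h1 h2]
  | step s xl xr h1 h2 hl hr ihl ihr =>
    intro hsI
    obtain ⟨n, hn⟩ := hqi s
    obtain ⟨hfeas1, hfeas2⟩ := hqf s h1 hsI h2
    have hn1 : nmin s.i ≤ n := by exact_mod_cast hn ▸ hfeas1
    have hn2 : n ≤ ⌊(s.t - Tmin Tb Tl nmin (s.i - 1)) / Tb⌋₊ := Nat.le_floor (hn ▸ hfeas2)
    have hmem : n ∈ bigA Tb Tl nmin s.t s.i :=
      Finset.mem_Icc.2 ⟨hn1, le_trans hn2 (le_max_right _ _)⟩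
    have hnpos : (0 : ℝ) < n := by
      exact_mod_cast lt_of_lt_of_le (hnmin s.i h1 hsI) hn1
    have hεn := hε s.i h1 hsI (n : ℝ) hnpos
    have bxl : xl ≤ V Tb Tl ε nmin (s.t - (n : ℝ) * Tb - Tl) s.i := by
      have := ihl hsI
      rwa [hn] at this
    have bxr : xr ≤ V Tb Tl ε nmin (s.t - (n : ℝ) * Tb - Tl) (s.i - 1) := by
      have := ihr (le_trans (Nat.sub_le _ _) hsI)
      rwa [hn] at this
    rw [hn]
    calc ε s.i (n : ℝ) * xl + (1 - ε s.i (n : ℝ)) * xr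
        ≤ fopt Tb Tl ε nmin s.t s.i n := by
          apply add_le_add
          · exact mul_le_mul_of_nonneg_left bxl hεn.1.le
          · exact mul_le_mul_of_nonneg_left bxr (by linarith [hεn.2])
      _ ≤ _ := by
          rw [V_bellman' ε nmin hTb.le hTl h1 h2]
          exact Finset.le_sup' _ hmem
end DMHHARQ.Aux

open DMHHARQ DMHHARQ.Aux


/-- Dynamic-programming principle for DMH-HARQ with integer blocklengths: the supremum over
all (history-dependent) feasible integer-blocklength policies of the utility from any state
`(t, i, k, τ)` is attained and depends only on `(t, i)`; it satisfies `ξ_max(t, 0) = 1`,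
`ξ_max(t, i) = 0` for `t < T_min^{(i)}`, and for `i ≥ 1`, `t ≥ T_min^{(i)}` the Bellman
equation: `ξ_max(t, i)` is the maximum over admissible integers `n` of
`ε_i(n)·ξ_max(t − n·T_b − T_l, i) + (1 − ε_i(n))·ξ_max(t − n·T_b − T_l, i−1)`. Consequently
an optimal deterministic policy depending only on `(t, i)` exists, achieving `ξ_max` from
every state: the recursive integer dynamic program solves the reliability-maximizing
schedule exactly. -/
theorem dmh_harq_bellman
    (I : ℕ) (hI : 1 ≤ I) (Tb Tl : ℝ) (hTb : 0 < Tb) (hTl : 0 < Tl)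
    (ε : ℕ → ℝ → ℝ)
    (hε : ∀ i, 1 ≤ i → i ≤ I → ∀ n : ℝ, 0 < n → ε i n ∈ Set.Ioo (0 : ℝ) 1)
    (nmin : ℕ → ℕ) (hnmin : ∀ i, 1 ≤ i → i ≤ I → 0 < nmin i) :
    -- the supremum is attained from every state and depends only on (t, i):
    (∀ (t : ℝ) (i : ℕ), i ≤ I → ∀ (k : ℕ) (τ : ℝ),
      IsGreatest {u : ℝ | ∃ pol : DMHState → ℝ, Feasible I Tb Tl nmin pol ∧
          IntegerValued pol ∧ PolicyUtility Tb Tl ε nmin pol ⟨t, i, k, τ⟩ u}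
        (xiMax I Tb Tl ε nmin t i)) ∧
    -- base case: no hop remaining is sure success:
    (∀ t : ℝ, xiMax I Tb Tl ε nmin t 0 = 1) ∧
    -- base case: insufficient remaining time is sure failure:
    (∀ (t : ℝ) (i : ℕ), 1 ≤ i → i ≤ I → t < Tmin Tb Tl nmin i →
      xiMax I Tb Tl ε nmin t i = 0) ∧
    -- Bellman equation: ξ_max(t, i) is the max over admissible integer blocklengths n:
    (∀ (t : ℝ) (i : ℕ), 1 ≤ i → i ≤ I → Tmin Tb Tl nmin i ≤ t →
      IsGreatest {x : ℝ | ∃ n : ℕ, nmin i ≤ n ∧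
          (n : ℝ) ≤ (t - Tmin Tb Tl nmin (i - 1)) / Tb ∧
          x = ε i n * xiMax I Tb Tl ε nmin (t - n * Tb - Tl) i
            + (1 - ε i n) * xiMax I Tb Tl ε nmin (t - n * Tb - Tl) (i - 1)}
        (xiMax I Tb Tl ε nmin t i)) ∧
    -- an optimal deterministic policy depending only on (t, i) exists:
    (∃ pol : DMHState → ℝ, Feasible I Tb Tl nmin pol ∧ IntegerValued pol ∧
      (∀ s s' : DMHState, s.t = s'.t → s.i = s'.i → pol s = pol s') ∧
      ∀ (t : ℝ) (i : ℕ), i ≤ I → ∀ (k : ℕ) (τ : ℝ),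
        PolicyUtility Tb Tl ε nmin pol ⟨t, i, k, τ⟩ (xiMax I Tb Tl ε nmin t i)) := by

  have key : ∀ (t : ℝ) (i : ℕ), i ≤ I → ∀ (k : ℕ) (τ : ℝ),
      IsGreatest {u : ℝ | ∃ pol : DMHState → ℝ, Feasible I Tb Tl nmin pol ∧
          IntegerValued pol ∧ PolicyUtility Tb Tl ε nmin pol ⟨t, i, k, τ⟩ u}
        (V Tb Tl ε nmin t i) := by
    intro t i hiI k τ
    constructor
    · exact ⟨polOpt Tb Tl ε nmin, polOpt_feasible ε nmin I hTb hTl, polOpt_integer ε nmin,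
        polOpt_achieves ε nmin hTb hTl ⌈t / Tl⌉₊ t le_rfl i k τ⟩
    · rintro u ⟨q, hqf, hqi, hqu⟩
      exact le_V ε nmin I hTb hTl hε hnmin q hqf hqi _ u hqu hiI
  have hxi : ∀ (t : ℝ) (i : ℕ), i ≤ I → xiMax I Tb Tl ε nmin t i = V Tb Tl ε nmin t i :=
    fun t i hiI => (key t i hiI 0 0).csSup_eq
  refine ⟨?_, ?_, ?_, ?_, ?_⟩
  · intro t i hiI k τ
    rw [hxi t i hiI]
    exact key t i hiI k τ
  · intro t
    rw [hxi t 0 (Nat.zero_le I), V_zero]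
  · intro t i h1 h2 hlt
    rw [hxi t i h2, V_timeout ε nmin h1 hlt]
  · intro t i h1 h2 ht
    have hi1 : i - 1 ≤ I := le_trans (Nat.sub_le _ _) h2
    constructor
    · refine ⟨nopt Tb Tl ε nmin t i, ?_, ?_, ?_⟩
      · exact (Finset.mem_Icc.1 (nopt_mem ε nmin t i)).1
      · exact cast_le_div nmin hTb hTl.le h1 ht (nopt_mem ε nmin t i)
      · rw [hxi t i h2, hxi _ i h2, hxi _ (i - 1) hi1]
        exact V_eq_fopt_nopt ε nmin hTb.le hTl h1 ht
    · rintro x ⟨n, hn1, hn2, rfl⟩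
      rw [hxi t i h2, hxi _ i h2, hxi _ (i - 1) hi1,
        V_bellman' ε nmin hTb.le hTl h1 ht]
      have hmem : n ∈ bigA Tb Tl nmin t i :=
        Finset.mem_Icc.2 ⟨hn1, le_trans (Nat.le_floor hn2) (le_max_right _ _)⟩
      exact Finset.le_sup' (fopt Tb Tl ε nmin t i) hmem
  · refine ⟨polOpt Tb Tl ε nmin, polOpt_feasible ε nmin I hTb hTl, polOpt_integer ε nmin,
      ?_, ?_⟩
    · intro s s' ht' hi'
      unfold polOpt
      rw [ht', hi']
    · intro t i hiI k τ
      rw [hxi t i hiI]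
      exact polOpt_achieves ε nmin hTb hTl ⌈t / Tl⌉₊ t le_rfl i k τ
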